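/- Let V be a Banach space with a normalized 1-subsymmetric basis (v_i), let 0 < γ < 1, and let X be a Banach space with a normalized basis (e_i) with projection constant K which satisfies asymptotic C-V-lower estimates for some C ≥ 1, i.e., ‖∑_{i=1}^n a_i x_i‖ ≥ C^{-1}‖∑_{i=1}^n a_i v_i‖_V whenever n ∈ ℕ, (x_i)_{i=1}^n is a normalized block sequence of (e_i)_{i=n}^∞ and (a_i)_{i=1}^n are real scalars. If γ ≤ (KC)^{-1}, then (e_i) K-dominates the unit vector basis (t_i) of the Tsirelson space T(V,γ). -/

import Mathlib

open Filter Topology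
open scoped ENNReal

noncomputable section

/-- A real Banach space is *reflexive* if the canonical inclusion into its double dual is
surjective. -/
def IsReflexiveSpace (X : Type*) [NormedAddCommGroup X] [NormedSpace ℝ X] : Prop :=
  Function.Surjective (NormedSpace.inclusionInDoubleDual ℝ X)

section Sequences

variable {E F V U : Type*}
variable [NormedAddCommGroup E] [NormedSpace ℝ E] [NormedAddCommGroup F] [NormedSpace ℝ F]
variable [NormedAddCommGroup V] [NormedSpace ℝ V] [NormedAddCommGroup U] [NormedSpace ℝ U]

/-- `(f i)` `C`-dominates `(e i)`: `‖∑ aᵢ eᵢ‖ ≤ C ‖∑ aᵢ fᵢ‖` for all finitely supported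
real scalar sequences `a`. -/
def Dominates (C : ℝ) (f : ℕ → F) (e : ℕ → E) : Prop :=
  ∀ a : ℕ →₀ ℝ, ‖a.sum fun i c => c • e i‖ ≤ C * ‖a.sum fun i c => c • f i‖

/-- `(f i)_{i<k}` `C`-dominates `(e i)_{i<k}`. -/
def DominatesFin {k : ℕ} (C : ℝ) (f : Fin k → F) (e : Fin k → E) : Prop :=
  ∀ a : Fin k → ℝ, ‖∑ i, a i • e i‖ ≤ C * ‖∑ i, a i • f i‖

/-- The sequence `(v i)` is normalized. -/
def SeqNormalized (v : ℕ → V) : Prop := ∀ i, ‖v i‖ = 1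

/-- The sequence `(v i)` is 1-unconditional. -/
def SeqUncond (v : ℕ → V) : Prop :=
  ∀ (s : Finset ℕ) (a ε : ℕ → ℝ), (∀ i, |ε i| ≤ 1) →
    ‖∑ i ∈ s, (ε i * a i) • v i‖ ≤ ‖∑ i ∈ s, a i • v i‖

/-- The sequence `(v i)` is 1-spreading. -/
def SeqSpreading (v : ℕ → V) : Prop :=
  ∀ (s : Finset ℕ) (a : ℕ → ℝ) (n : ℕ → ℕ), StrictMono n →
    ‖∑ i ∈ s, a i • v (n i)‖ = ‖∑ i ∈ s, a i • v i‖

/-- The closed linear span of `(v i)` is the whole space. -/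
def SeqTotal (v : ℕ → V) : Prop :=
  (Submodule.span ℝ (Set.range v)).topologicalClosure = ⊤

/-- `(v i)` is a normalized 1-unconditional (Schauder) basis of `V`. -/
def Is1UncondBasis (v : ℕ → V) : Prop :=
  SeqNormalized v ∧ SeqUncond v ∧ SeqTotal v

/-- `(v i)` is a normalized 1-subsymmetric (i.e. 1-unconditional and 1-spreading) basis. -/
def Is1SubsymBasis (v : ℕ → V) : Prop :=
  Is1UncondBasis v ∧ SeqSpreading v

/-- `(b j)` is a block sequence of the basis `(v i)`: each `b j` is a nonzero finite linear
combination of the `v i`'s, and the supports are successive. -/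
def IsBlockSeqOfBasis (v : ℕ → V) (b : ℕ → V) : Prop :=
  ∃ c : ℕ → (ℕ →₀ ℝ),
    (∀ j, b j = (c j).sum fun i r => r • v i) ∧ (∀ j, b j ≠ 0) ∧
    ∀ j, ∀ i ∈ (c j).support, ∀ i' ∈ (c (j + 1)).support, i < i'

/-- The strong right shift property (SRS) of the basis `(v i)`. -/
def HasSRS (v : ℕ → V) : Prop :=
  ∃ c > (0 : ℝ), ∀ (n : ℕ) (a : ℕ →₀ ℝ),
    c * ‖a.sum fun i r => r • v i‖ ≤ ‖a.sum fun i r => r • v (i + n)‖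

/-- The weak left shift property (WLS) of the basis `(v i)`. -/
def HasWLS (v : ℕ → V) : Prop :=
  ∃ d > (0 : ℝ), ∀ m : ℕ, ∃ L : ℕ, m ≤ L ∧ ∀ k ≤ m, ∀ a : ℕ →₀ ℝ, (∀ i ≤ L, a i = 0) →
    ∀ b : ℕ →₀ ℝ, (∀ j, b j = a (j + k)) →
      d * ‖a.sum fun i r => r • v i‖ ≤ ‖b.sum fun i r => r • v i‖

end Sequences

section Trees

variable {X V U : Type*} [NormedAddCommGroup X] [NormedSpace ℝ X]
variable [NormedAddCommGroup V] [NormedSpace ℝ V] [NormedAddCommGroup U] [NormedSpace ℝ U]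

/-- The branch of the tree `(x_α)` (indexed by finite strictly increasing lists of naturals)
along the strictly increasing sequence `n`. -/
def TreeBranch (x : List ℕ → X) (n : ℕ → ℕ) : ℕ → X := fun i => x ((List.range (i + 1)).map n)

/-- The branch of a tree of length `k` along the strictly increasing sequence `n`. -/
def TreeBranchFin (k : ℕ) (x : List ℕ → X) (n : ℕ → ℕ) : Fin k → X :=
  fun i => x ((List.range ((i : ℕ) + 1)).map n)

/-- `x` is a normalized weakly null tree (of infinite length): every member indexed by a
strictly increasing list has norm one, and every node is weakly null. -/
def IsNWNTree (x : List ℕ → X) : Prop :=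
  (∀ l : List ℕ, l.Pairwise (· < ·) → ‖x l‖ = 1) ∧
  ∀ l : List ℕ, l.Pairwise (· < ·) → ∀ f : StrongDual ℝ X,
    Tendsto (fun m => f (x (l ++ [m]))) atTop (nhds 0)

/-- `x` is a normalized weakly null tree of length `k`. -/
def IsNWNTreeLen (k : ℕ) (x : List ℕ → X) : Prop :=
  (∀ l : List ℕ, l.Pairwise (· < ·) → l.length ≤ k → ‖x l‖ = 1) ∧
  ∀ l : List ℕ, l.Pairwise (· < ·) → l.length < k → ∀ f : StrongDual ℝ X,
    Tendsto (fun m => f (x (l ++ [m]))) atTop (nhds 0)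

/-- `X` satisfies `C`-`V`-lower tree estimates w.r.t. the basis `(v i)`. -/
def LowerTreeEst (X : Type*) [NormedAddCommGroup X] [NormedSpace ℝ X]
    {V : Type*} [NormedAddCommGroup V] [NormedSpace ℝ V] (C : ℝ) (v : ℕ → V) : Prop :=
  ∀ x : List ℕ → X, IsNWNTree x → ∃ n : ℕ → ℕ, StrictMono n ∧ Dominates C (TreeBranch x n) v

/-- `X` satisfies `C`-`U`-upper tree estimates w.r.t. the basis `(u i)`. -/
def UpperTreeEst (X : Type*) [NormedAddCommGroup X] [NormedSpace ℝ X]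
    {U : Type*} [NormedAddCommGroup U] [NormedSpace ℝ U] (C : ℝ) (u : ℕ → U) : Prop :=
  ∀ x : List ℕ → X, IsNWNTree x → ∃ n : ℕ → ℕ, StrictMono n ∧ Dominates C u (TreeBranch x n)

/-- `X` satisfies asymptotic `C`-`V`-lower tree estimates. -/
def AsympLowerTreeEst (X : Type*) [NormedAddCommGroup X] [NormedSpace ℝ X]
    {V : Type*} [NormedAddCommGroup V] [NormedSpace ℝ V] (C : ℝ) (v : ℕ → V) : Prop :=
  ∀ (k : ℕ) (x : List ℕ → X), IsNWNTreeLen k x →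
    ∃ n : ℕ → ℕ, StrictMono n ∧ DominatesFin C (TreeBranchFin k x n) fun i : Fin k => v i

/-- `X` satisfies asymptotic `C`-`U`-upper tree estimates. -/
def AsympUpperTreeEst (X : Type*) [NormedAddCommGroup X] [NormedSpace ℝ X]
    {U : Type*} [NormedAddCommGroup U] [NormedSpace ℝ U] (C : ℝ) (u : ℕ → U) : Prop :=
  ∀ (k : ℕ) (x : List ℕ → X), IsNWNTreeLen k x →
    ∃ n : ℕ → ℕ, StrictMono n ∧ DominatesFin C (fun i : Fin k => u i) (TreeBranchFin k x n)

end Trees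

/-- A finite-dimensional decomposition (FDD) of `Z`: a sequence of finite-dimensional
subspaces together with the corresponding continuous coordinate projections, such that every
`z ∈ Z` is the norm-convergent sum of its coordinates. -/
structure FDD (Z : Type*) [NormedAddCommGroup Z] [NormedSpace ℝ Z] where
  E : ℕ → Submodule ℝ Z
  finDim : ∀ n, FiniteDimensional ℝ (E n)
  proj : ℕ → Z →L[ℝ] Z
  mem_proj : ∀ n z, proj n z ∈ E n
  proj_self : ∀ n, ∀ z ∈ E n, proj n z = z
  proj_other : ∀ m n, m ≠ n → ∀ z ∈ E n, proj m z = 0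
  tendsto_partialSum :
    ∀ z : Z, Tendsto (fun N => ∑ n ∈ Finset.range N, proj n z) atTop (nhds z)

section FDDdefs

variable {Z V U : Type*} [NormedAddCommGroup Z] [NormedSpace ℝ Z]
variable [NormedAddCommGroup V] [NormedSpace ℝ V] [NormedAddCommGroup U] [NormedSpace ℝ U]

/-- The support of `z` with respect to the FDD `F`. -/
def FDD.supp (F : FDD Z) (z : Z) : Set ℕ := {i | F.proj i z ≠ 0}

/-- `(z j)` is a block sequence of the FDD `F`. -/
def FDD.IsBlockSeq (F : FDD Z) (z : ℕ → Z) : Prop :=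
  (∀ j, z j ≠ 0 ∧ (F.supp (z j)).Finite) ∧
  ∀ j, ∀ i ∈ F.supp (z j), ∀ i' ∈ F.supp (z (j + 1)), i < i'

/-- The FDD `F` is shrinking: every bounded block sequence is weakly null. -/
def FDD.Shrinking (F : FDD Z) : Prop :=
  ∀ z : ℕ → Z, F.IsBlockSeq z → (∃ M : ℝ, ∀ j, ‖z j‖ ≤ M) →
    ∀ f : StrongDual ℝ Z, Tendsto (fun j => f (z j)) atTop (nhds 0)

/-- The projection onto the coordinates in `[a,b)`. -/
def FDD.projIco (F : FDD Z) (a b : ℕ) : Z →L[ℝ] Z := ∑ i ∈ Finset.Ico a b, F.proj i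

/-- The FDD `F` is bimonotone. -/
def FDD.Bimonotone (F : FDD Z) : Prop := ∀ (a b : ℕ) (z : Z), ‖F.projIco a b z‖ ≤ ‖z‖

/-- `G` is a blocking of the FDD `F`. -/
def FDD.IsBlocking (G F : FDD Z) : Prop :=
  ∃ k : ℕ → ℕ, k 0 = 0 ∧ StrictMono k ∧
    ∀ n, (G.proj n : Z →L[ℝ] Z) = ∑ i ∈ Finset.Ico (k n) (k (n + 1)), F.proj i

/-- The FDD `F` satisfies `C`-`V`-lower estimates in `Z`. -/
def FDD.LowerEst (F : FDD Z) (C : ℝ) (v : ℕ → V) : Prop :=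
  ∀ z : ℕ → Z, F.IsBlockSeq z → (∀ j, ‖z j‖ = 1) → Dominates C z v

/-- The FDD `F` satisfies `C`-`U`-upper estimates in `Z`. -/
def FDD.UpperEst (F : FDD Z) (C : ℝ) (u : ℕ → U) : Prop :=
  ∀ z : ℕ → Z, F.IsBlockSeq z → (∀ j, ‖z j‖ = 1) → Dominates C u z

/-- `(x i)_{i<n}` is a block sequence of `(E i)_{i≥n}` (of length `n`) of the FDD `F`. -/
def FDD.IsAsympBlock (F : FDD Z) (n : ℕ) (x : Fin n → Z) : Prop :=
  (∀ i, x i ≠ 0 ∧ (F.supp (x i)).Finite ∧ ∀ j ∈ F.supp (x i), n ≤ j) ∧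
  ∀ i i' : Fin n, i < i' → ∀ j ∈ F.supp (x i), ∀ j' ∈ F.supp (x i'), j < j'

/-- The FDD `F` satisfies asymptotic `C`-`V`-lower estimates in `Z`. -/
def FDD.AsympLowerEst (F : FDD Z) (C : ℝ) (v : ℕ → V) : Prop :=
  ∀ (n : ℕ) (x : Fin n → Z), F.IsAsympBlock n x →
    C⁻¹ * ‖∑ i, ‖x i‖ • v (i : ℕ)‖ ≤ ‖∑ i, x i‖

/-- The FDD `F` satisfies asymptotic `C`-`U`-upper estimates in `Z`. -/
def FDD.AsympUpperEst (F : FDD Z) (C : ℝ) (u : ℕ → U) : Prop :=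
  ∀ (n : ℕ) (x : Fin n → Z), F.IsAsympBlock n x →
    ‖∑ i, x i‖ ≤ C * ‖∑ i, ‖x i‖ • u (i : ℕ)‖

/-- The support of a functional `f` with respect to the dual FDD `(E_i^*)`. -/
def FDD.dualSupp (F : FDD Z) (f : StrongDual ℝ Z) : Set ℕ :=
  {i | f.comp (F.proj i) ≠ 0}

/-- `(g j)` is a block sequence of the dual FDD `(E_i^*)` in `Z^(*)`. -/
def FDD.IsDualBlockSeq (F : FDD Z) (g : ℕ → StrongDual ℝ Z) : Prop :=
  (∀ j, g j ≠ 0 ∧ (F.dualSupp (g j)).Finite) ∧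
  ∀ j, ∀ i ∈ F.dualSupp (g j), ∀ i' ∈ F.dualSupp (g (j + 1)), i < i'

/-- The space `c₀₀(⊕ E_i)` of finitely supported vectors of the FDD `F`. -/
def FDD.finVectors (F : FDD Z) : Submodule ℝ Z where
  carrier := {z | (F.supp z).Finite}
  zero_mem' := by
    refine Set.Finite.subset Set.finite_empty ?_
    intro i hi
    simp only [FDD.supp, Set.mem_setOf_eq, map_zero, ne_eq, not_true_eq_false] at hi
  add_mem' := by
    intro a b ha hb
    refine Set.Finite.subset (Set.Finite.union ha hb) ?_
    intro i hi
    simp only [FDD.supp, Set.mem_setOf_eq, Set.mem_union] at hi ⊢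
    by_contra hcon
    push_neg at hcon
    rw [map_add, hcon.1, hcon.2, add_zero] at hi
    exact hi rfl
  smul_mem' := by
    intro c a ha
    refine Set.Finite.subset ha ?_
    intro i hi
    simp only [FDD.supp, Set.mem_setOf_eq] at hi ⊢
    intro h0
    rw [map_smul, h0, smul_zero] at hi
    exact hi rfl

/-- The quantity `‖∑_{j<k} ‖P_{[n_j, n_{j+1})} z‖ v_j‖` appearing in the definition of the
norm of `Z_V(E)`. -/
def zvBlockSum (F : FDD Z) (v : ℕ → V) (z : Z) (k : ℕ) (n : ℕ → ℕ) : ℝ :=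
  ‖∑ j ∈ Finset.range k, ‖F.projIco (n j) (n (j + 1)) z‖ • v j‖

/-- Admissibility of the data `(k, n)` in the definition of the norm of `Z_V(E)`. -/
def IsZVAdmissible (k : ℕ) (n : ℕ → ℕ) : Prop := 1 ≤ k ∧ n 0 = 0 ∧ StrictMono n

/-- The norm of the space `Z_V(E)`. -/
def zvNorm (F : FDD Z) (v : ℕ → V) (z : Z) : ℝ :=
  sSup {r | ∃ k n, IsZVAdmissible k n ∧ r = zvBlockSum F v z k n}

end FDDdefs

/-- A bundled Banach space. -/
structure BanachPack where
  carrier : Type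
  [grp : NormedAddCommGroup carrier]
  [nsp : NormedSpace ℝ carrier]
  [cpl : CompleteSpace carrier]

attribute [instance] BanachPack.grp BanachPack.nsp BanachPack.cpl

/-- A bundled Banach space with an FDD. -/
structure BanachFDDPack where
  carrier : Type
  [grp : NormedAddCommGroup carrier]
  [nsp : NormedSpace ℝ carrier]
  [cpl : CompleteSpace carrier]
  fdd : FDD carrier

attribute [instance] BanachFDDPack.grp BanachFDDPack.nsp BanachFDDPack.cpl

section Tsirelson

variable {V : Type*} [NormedAddCommGroup V] [NormedSpace ℝ V]

/-- The auxiliary norms `‖·‖_{ℓ, T(V,γ)}` on `c₀₀ = ℕ →₀ ℝ` used in the definition of the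
Tsirelson space `T(V,γ)` associated to `V` and `γ`. -/
def tsNormAux (v : ℕ → V) (γ : ℝ) : ℕ → (ℕ →₀ ℝ) → ℝ
  | 0 => fun x => ⨆ i, |x i|
  | ℓ + 1 => fun x =>
      max (tsNormAux v γ ℓ x)
        (sSup {r | ∃ (n : ℕ) (A : ℕ → Finset ℕ), 1 ≤ n ∧
          (∀ i < n, ∀ a ∈ A i, n ≤ a) ∧
          (∀ i j, i < j → j < n → ∀ a ∈ A i, ∀ b ∈ A j, a < b) ∧
          r = γ * ‖∑ i ∈ Finset.range n, tsNormAux v γ ℓ (x.filter (· ∈ A i)) • v i‖})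

/-- The norm of the Tsirelson space `T(V,γ)` on `c₀₀ = ℕ →₀ ℝ`. -/
def tsNorm (v : ℕ → V) (γ : ℝ) (x : ℕ →₀ ℝ) : ℝ := ⨆ ℓ, tsNormAux v γ ℓ x

end Tsirelson

/-- The dual norm, on `c₀₀ = ℕ →₀ ℝ`, of a norm `N` on `c₀₀`. -/
def dualNormCoo (N : (ℕ →₀ ℝ) → ℝ) (b : ℕ →₀ ℝ) : ℝ :=
  sSup {r | ∃ x : ℕ →₀ ℝ, N x ≤ 1 ∧ r = x.sum fun i c => c * b i}

/-- The `ℓ_p` norm of a finite real sequence (`p = ∞` gives the max norm). -/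
def lpSum (p : ℝ≥0∞) {k : ℕ} (a : Fin k → ℝ) : ℝ :=
  if p = ∞ then ⨆ i, |a i| else (∑ i, |a i| ^ p.toReal) ^ (1 / p.toReal)

section LpEstimates

variable {X Z : Type*} [NormedAddCommGroup X] [NormedSpace ℝ X]
variable [NormedAddCommGroup Z] [NormedSpace ℝ Z]

/-- `X` satisfies asymptotic `C`-`ℓ_p`-lower tree estimates. -/
def AsympLpLowerTreeEst (X : Type*) [NormedAddCommGroup X] [NormedSpace ℝ X]
    (C : ℝ) (p : ℝ≥0∞) : Prop :=
  ∀ (k : ℕ) (x : List ℕ → X), IsNWNTreeLen k x →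
    ∃ n : ℕ → ℕ, StrictMono n ∧ ∀ a : Fin k → ℝ,
      C⁻¹ * lpSum p a ≤ ‖∑ i, a i • TreeBranchFin k x n i‖

/-- `X` satisfies asymptotic `C`-`ℓ_q`-upper tree estimates. -/
def AsympLpUpperTreeEst (X : Type*) [NormedAddCommGroup X] [NormedSpace ℝ X]
    (C : ℝ) (q : ℝ≥0∞) : Prop :=
  ∀ (k : ℕ) (x : List ℕ → X), IsNWNTreeLen k x →
    ∃ n : ℕ → ℕ, StrictMono n ∧ ∀ a : Fin k → ℝ,
      ‖∑ i, a i • TreeBranchFin k x n i‖ ≤ C * lpSum q a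

/-- The FDD `F` satisfies asymptotic `C`-`ℓ_p`-lower estimates. -/
def FDD.AsympLpLowerEst (F : FDD Z) (C : ℝ) (p : ℝ≥0∞) : Prop :=
  ∀ (n : ℕ) (x : Fin n → Z), F.IsAsympBlock n x →
    C⁻¹ * lpSum p (fun i => ‖x i‖) ≤ ‖∑ i, x i‖

/-- The FDD `F` satisfies asymptotic `C`-`ℓ_q`-upper estimates. -/
def FDD.AsympLpUpperEst (F : FDD Z) (C : ℝ) (q : ℝ≥0∞) : Prop :=
  ∀ (n : ℕ) (x : Fin n → Z), F.IsAsympBlock n x →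
    ‖∑ i, x i‖ ≤ C * lpSum q (fun i => ‖x i‖)

end LpEstimates

end

/-! By induction on `ℓ`, `‖a‖_ℓ ≤ K ‖x‖` for `x = ∑ aᵢ eᵢ`. Given an admissible family
`A₀ < ⋯ < A_{n-1}` with `n ≤ min A₀`, enlarge the `Aᵢ` to successive intervals `Jᵢ` starting at
`n` and let `xᵢ` be the projection of `x` onto `Jᵢ`. Restricting coordinates does not increase
`‖·‖_ℓ`, so the induction hypothesis gives `‖P_{Aᵢ} a‖_ℓ ≤ ‖P_{Jᵢ} a‖_ℓ ≤ K ‖xᵢ‖`. By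
1-unconditionality, and the asymptotic lower estimate applied to the nonzero `xᵢ` (moved back to
consecutive positions by 1-spreading),
`γ ‖∑ ‖P_{Aᵢ} a‖_ℓ vᵢ‖ ≤ γ K ‖∑ ‖xᵢ‖ vᵢ‖ ≤ γ K C ‖∑ xᵢ‖ ≤ γ K² C ‖x‖ ≤ K ‖x‖`,
the last two steps because `∑ xᵢ` is an interval projection of `x` and `γ K C ≤ 1`. -/

theorem Finset.sum_range_sum_Ico {M : Type*} [AddCommMonoid M] (f : ℕ → M) {g : ℕ → ℕ}
    (hg : Monotone g) (n : ℕ) :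
    ∑ i ∈ Finset.range n, ∑ j ∈ Finset.Ico (g i) (g (i + 1)), f j =
      ∑ j ∈ Finset.Ico (g 0) (g n), f j := by
  induction n with
  | zero => simp
  | succ n ih =>
    rw [Finset.sum_range_succ, ih, Finset.sum_Ico_consecutive f (hg n.zero_le) (hg n.le_succ)]

theorem Finset.sum_orderEmbOfFin {α M : Type*} [LinearOrder α] [AddCommMonoid M] (s : Finset α)
    (f : α → M) : ∑ t, f (s.orderEmbOfFin rfl t) = ∑ i ∈ s, f i := by
  conv_rhs => rw [← s.map_orderEmbOfFin_univ rfl, Finset.sum_map]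
  rfl

theorem Finsupp.linearCombination_filter_mem {X : Type*} [AddCommMonoid X] [Module ℝ X]
    (e : ℕ → X) (a : ℕ →₀ ℝ) (J : Finset ℕ) :
    Finsupp.linearCombination ℝ e (a.filter (· ∈ J)) = ∑ j ∈ J, a j • e j := by
  rw [Finsupp.linearCombination_apply_of_mem_supported ℝ (s := J)
    fun j hj => (Finset.mem_filter.mp hj).2]
  exact Finset.sum_congr rfl fun j hj => by rw [Finsupp.filter_apply_pos _ _ hj]

theorem Finsupp.abs_apply_le_sum_abs (x : ℕ →₀ ℝ) (i : ℕ) : |x i| ≤ ∑ j ∈ x.support, |x j| := by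
  by_cases hi : i ∈ x.support
  · exact Finset.single_le_sum (f := fun j => |x j|) (fun j _ => abs_nonneg _) hi
  · rw [Finsupp.notMem_support_iff.mp hi, abs_zero]
    exact Finset.sum_nonneg fun j _ => abs_nonneg _

theorem Finsupp.bddAbove_range_abs (x : ℕ →₀ ℝ) : BddAbove (Set.range fun i => |x i|) :=
  ⟨_, Set.forall_mem_range.mpr x.abs_apply_le_sum_abs⟩

theorem Finsupp.sum_sum_abs_filter_le (x : ℕ →₀ ℝ) {s : Finset ℕ} {A : ℕ → Finset ℕ}
    (hA : (s : Set ℕ).PairwiseDisjoint A) :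
    ∑ i ∈ s, ∑ j ∈ (x.filter (· ∈ A i)).support, |x.filter (· ∈ A i) j| ≤
      ∑ j ∈ x.support, |x j| := by
  have hfilter : ∀ i, ∑ j ∈ (x.filter (· ∈ A i)).support, |x.filter (· ∈ A i) j| =
      ∑ j ∈ x.support.filter (· ∈ A i), |x j| := fun i =>
    Finset.sum_congr rfl fun j hj => by
      rw [Finsupp.filter_apply_pos _ _ (Finset.mem_filter.mp hj).2]
  have hdisj : (s : Set ℕ).PairwiseDisjoint fun i => x.support.filter (· ∈ A i) :=
    hA.mono fun i j hj => (Finset.mem_filter.mp hj).2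
  simp_rw [hfilter]
  rw [← Finset.sum_biUnion hdisj]
  exact Finset.sum_le_sum_of_subset_of_nonneg
    (Finset.biUnion_subset.mpr fun i _ => Finset.filter_subset _ _) fun j _ _ => abs_nonneg _

theorem StrictMono.exists_extend_fin {m : ℕ} {σ : Fin m → ℕ} (hσ : StrictMono σ) :
    ∃ τ : ℕ → ℕ, StrictMono τ ∧ ∀ t : Fin m, τ t = σ t := by
  set N := ∑ t, σ t
  have hle : ∀ t, σ t ≤ N := fun t =>
    Finset.single_le_sum (f := σ) (fun _ _ => Nat.zero_le _) (Finset.mem_univ t)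
  refine ⟨fun k => if h : k < m then σ ⟨k, h⟩ else N + k, fun k k' hkk' => ?_, fun t => ?_⟩
  · dsimp only
    split_ifs with hk hk'
    · exact hσ (Fin.mk_lt_mk.mpr hkk')
    · have := hle ⟨k, hk⟩; omega
    · omega
    · omega
  · simp [t.isLt]

section TsirelsonNorm

variable {V : Type*} [NormedAddCommGroup V] [NormedSpace ℝ V] {v : ℕ → V} {γ : ℝ}

def IsTsAdmissible (n : ℕ) (A : ℕ → Finset ℕ) : Prop :=
  1 ≤ n ∧ (∀ i < n, ∀ a ∈ A i, n ≤ a) ∧ ∀ i j, i < j → j < n → ∀ a ∈ A i, ∀ b ∈ A j, a < b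

theorem IsTsAdmissible.mono {n : ℕ} {A B : ℕ → Finset ℕ} (h : IsTsAdmissible n A)
    (hBA : ∀ i, B i ⊆ A i) : IsTsAdmissible n B :=
  ⟨h.1, fun i hi a ha => h.2.1 i hi a (hBA i ha),
    fun i j hij hj a ha b hb => h.2.2 i j hij hj a (hBA i ha) b (hBA j hb)⟩

theorem IsTsAdmissible.pairwiseDisjoint {n : ℕ} {A : ℕ → Finset ℕ} (h : IsTsAdmissible n A) :
    (Finset.range n : Set ℕ).PairwiseDisjoint A := by
  have key : ∀ {i j}, i < j → j < n → Disjoint (A i) (A j) := fun hij hj =>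
    Finset.disjoint_left.mpr fun a ha ha' => (h.2.2 _ _ hij hj a ha a ha').false
  intro i hi j hj hij
  simp only [Finset.coe_range, Set.mem_Iio] at hi hj
  rcases hij.lt_or_gt with hij | hij
  · exact key hij hj
  · exact (key hij hi).symm

theorem IsTsAdmissible.exists_Ico_cover {n : ℕ} {A : ℕ → Finset ℕ} (hA : IsTsAdmissible n A) :
    ∃ g : ℕ → ℕ, Monotone g ∧ g 0 = n ∧ ∀ i < n, A i ⊆ Finset.Ico (g i) (g (i + 1)) := by
  refine ⟨fun i => max n (((Finset.range i).biUnion A).sup (· + 1)), fun i i' hii' => ?_,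
    by simp, fun i hi a ha => Finset.mem_Ico.mpr ⟨?_, ?_⟩⟩
  · exact max_le_max le_rfl (Finset.sup_mono (Finset.biUnion_subset_biUnion_of_subset_left _
      (Finset.range_subset_range.mpr hii')))
  · refine max_le (hA.2.1 i hi a ha) (Finset.sup_le fun b hb => ?_)
    obtain ⟨j, hj, hbj⟩ := Finset.mem_biUnion.mp hb
    exact hA.2.2 j i (Finset.mem_range.mp hj) hi b hbj a ha
  · refine lt_max_of_lt_right (Nat.lt_of_succ_le (Finset.le_sup (f := (· + 1)) ?_))
    exact Finset.mem_biUnion.mpr ⟨i, Finset.self_mem_range_succ i, ha⟩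

theorem tsNormAux_succ (ℓ : ℕ) (x : ℕ →₀ ℝ) :
    tsNormAux v γ (ℓ + 1) x = max (tsNormAux v γ ℓ x)
      (sSup {r | ∃ n A, IsTsAdmissible n A ∧
        r = γ * ‖∑ i ∈ Finset.range n, tsNormAux v γ ℓ (x.filter (· ∈ A i)) • v i‖}) := by
  simp only [tsNormAux, IsTsAdmissible, and_assoc]

theorem tsNormAux_nonneg (ℓ : ℕ) (x : ℕ →₀ ℝ) : 0 ≤ tsNormAux v γ ℓ x := by
  induction ℓ with
  | zero => exact (abs_nonneg (x 0)).trans (le_ciSup x.bddAbove_range_abs 0)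
  | succ ℓ ih => exact ih.trans (by rw [tsNormAux_succ]; exact le_max_left _ _)

theorem tsNormAux_le_succ (ℓ : ℕ) (x : ℕ →₀ ℝ) :
    tsNormAux v γ ℓ x ≤ tsNormAux v γ (ℓ + 1) x := by
  rw [tsNormAux_succ]
  exact le_max_left _ _

theorem tsNormAux_succ_le {ℓ : ℕ} {x : ℕ →₀ ℝ} {B : ℝ} (h₀ : tsNormAux v γ ℓ x ≤ B)
    (h : ∀ n A, IsTsAdmissible n A →
      γ * ‖∑ i ∈ Finset.range n, tsNormAux v γ ℓ (x.filter (· ∈ A i)) • v i‖ ≤ B) :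
    tsNormAux v γ (ℓ + 1) x ≤ B := by
  rw [tsNormAux_succ]
  refine max_le h₀ (Real.sSup_le ?_ ((tsNormAux_nonneg ℓ x).trans h₀))
  rintro r ⟨n, A, hA, rfl⟩
  exact h n A hA

/- `Real.sSup` of an unbounded set is `0`, so bounding an admissible sum by
`tsNormAux v γ (ℓ + 1) x` needs the `ℓ₁` bound below. -/
section NormalizedBasis

variable (hv : ∀ i, ‖v i‖ ≤ 1) (hγ : γ ≤ 1)
include hv hγ

theorem admissibleSum_le_sum_abs {ℓ : ℕ}
    (ih : ∀ y : ℕ →₀ ℝ, tsNormAux v γ ℓ y ≤ ∑ j ∈ y.support, |y j|)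
    {n : ℕ} {A : ℕ → Finset ℕ} (hA : IsTsAdmissible n A) (x : ℕ →₀ ℝ) :
    γ * ‖∑ i ∈ Finset.range n, tsNormAux v γ ℓ (x.filter (· ∈ A i)) • v i‖ ≤
      ∑ j ∈ x.support, |x j| := calc
  _ ≤ ‖∑ i ∈ Finset.range n, tsNormAux v γ ℓ (x.filter (· ∈ A i)) • v i‖ :=
      mul_le_of_le_one_left (norm_nonneg _) hγ
  _ ≤ ∑ i ∈ Finset.range n, tsNormAux v γ ℓ (x.filter (· ∈ A i)) := by
      refine (norm_sum_le _ _).trans (Finset.sum_le_sum fun i _ => ?_)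
      rw [norm_smul, Real.norm_of_nonneg (tsNormAux_nonneg ℓ _)]
      exact mul_le_of_le_one_right (tsNormAux_nonneg ℓ _) (hv i)
  _ ≤ ∑ i ∈ Finset.range n, ∑ j ∈ (x.filter (· ∈ A i)).support, |x.filter (· ∈ A i) j| :=
      Finset.sum_le_sum fun i _ => ih _
  _ ≤ ∑ j ∈ x.support, |x j| := x.sum_sum_abs_filter_le hA.pairwiseDisjoint

theorem tsNormAux_le_sum_abs (ℓ : ℕ) (x : ℕ →₀ ℝ) :
    tsNormAux v γ ℓ x ≤ ∑ j ∈ x.support, |x j| := by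
  induction ℓ generalizing x with
  | zero => exact ciSup_le x.abs_apply_le_sum_abs
  | succ ℓ ih => exact tsNormAux_succ_le (ih x) fun n A hA => admissibleSum_le_sum_abs hv hγ ih hA x

theorem le_tsNormAux_succ {ℓ n : ℕ} {A : ℕ → Finset ℕ} (hA : IsTsAdmissible n A) (x : ℕ →₀ ℝ) :
    γ * ‖∑ i ∈ Finset.range n, tsNormAux v γ ℓ (x.filter (· ∈ A i)) • v i‖ ≤
      tsNormAux v γ (ℓ + 1) x := by
  have hbdd : BddAbove {r | ∃ n A, IsTsAdmissible n A ∧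
      r = γ * ‖∑ i ∈ Finset.range n, tsNormAux v γ ℓ (x.filter (· ∈ A i)) • v i‖} := by
    refine ⟨∑ j ∈ x.support, |x j|, ?_⟩
    rintro r ⟨n, A, hA, rfl⟩
    exact admissibleSum_le_sum_abs hv hγ (tsNormAux_le_sum_abs hv hγ ℓ) hA x
  rw [tsNormAux_succ]
  exact (le_csSup hbdd ⟨n, A, hA, rfl⟩).trans (le_max_right _ _)

theorem tsNormAux_filter_le (ℓ : ℕ) (x : ℕ →₀ ℝ) (s : Finset ℕ) :
    tsNormAux v γ ℓ (x.filter (· ∈ s)) ≤ tsNormAux v γ ℓ x := by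
  induction ℓ generalizing x s with
  | zero =>
    refine ciSup_le fun i => le_trans ?_ (le_ciSup x.bddAbove_range_abs i)
    rw [Finsupp.filter_apply]
    split_ifs
    exacts [le_rfl, abs_zero.trans_le (abs_nonneg _)]
  | succ ℓ ih =>
    refine tsNormAux_succ_le ((ih x s).trans (tsNormAux_le_succ ℓ x)) fun n A hA => ?_
    have hfilter : ∀ i, (x.filter (· ∈ s)).filter (· ∈ A i) = x.filter (· ∈ A i ∩ s) := by
      intro i
      ext j
      simp only [Finsupp.filter_apply, Finset.mem_inter]
      split_ifs <;> tauto
    simp only [hfilter]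
    exact le_tsNormAux_succ hv hγ (hA.mono fun i => Finset.inter_subset_left) x

end NormalizedBasis

end TsirelsonNorm

section UnconditionalSpreading

variable {V : Type*} [NormedAddCommGroup V] [NormedSpace ℝ V] {v : ℕ → V}

theorem SeqUncond.norm_sum_le (hv : SeqUncond v) {s : Finset ℕ} {a b : ℕ → ℝ}
    (hab : ∀ i ∈ s, |a i| ≤ b i) : ‖∑ i ∈ s, a i • v i‖ ≤ ‖∑ i ∈ s, b i • v i‖ := by
  classical
  set ε : ℕ → ℝ := fun i => if i ∈ s then a i / b i else 0
  have hε : ∀ i, |ε i| ≤ 1 := fun i => by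
    by_cases hi : i ∈ s
    · simp only [ε, if_pos hi, abs_div]
      exact div_le_one_of_le₀ ((hab i hi).trans (le_abs_self _)) (abs_nonneg _)
    · simp [ε, hi]
  have hεb : ∀ i ∈ s, ε i * b i = a i := fun i hi => by
    by_cases hb : b i = 0
    · simpa [hb] using (abs_nonpos_iff.mp (hb ▸ hab i hi)).symm
    · simp only [ε, if_pos hi, div_mul_cancel₀ _ hb]
  calc ‖∑ i ∈ s, a i • v i‖ = ‖∑ i ∈ s, (ε i * b i) • v i‖ := by
        congr 1
        exact Finset.sum_congr rfl fun i hi => by rw [hεb i hi]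
    _ ≤ _ := hv s b ε hε

theorem SeqSpreading.norm_sum_fin (hv : SeqSpreading v) {m : ℕ} {σ : Fin m → ℕ}
    (hσ : StrictMono σ) (a : Fin m → ℝ) :
    ‖∑ t, a t • v (σ t)‖ = ‖∑ t : Fin m, a t • v t‖ := by
  obtain ⟨τ, hτ, hτσ⟩ := hσ.exists_extend_fin
  set a' : ℕ → ℝ := fun k => if h : k < m then a ⟨k, h⟩ else 0
  have hsum : ∀ w : ℕ → V, ∑ t : Fin m, a t • w t = ∑ k ∈ Finset.range m, a' k • w k := by
    intro w
    rw [← Fin.sum_univ_eq_sum_range]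
    simp [a']
  calc ‖∑ t, a t • v (σ t)‖ = ‖∑ k ∈ Finset.range m, a' k • v (τ k)‖ := by
        rw [← hsum (fun k => v (τ k))]
        simp only [hτσ]
    _ = ‖∑ k ∈ Finset.range m, a' k • v k‖ := hv _ a' τ hτ
    _ = _ := by rw [hsum v]

end UnconditionalSpreading

section BasisEstimates

variable {X V : Type*} [NormedAddCommGroup X] [NormedSpace ℝ X]
  [NormedAddCommGroup V] [NormedSpace ℝ V] {e : ℕ → X} {v : ℕ → V} {K C : ℝ}

def IntervalProjBounded (e : ℕ → X) (K : ℝ) : Prop :=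
  ∀ (a : ℕ →₀ ℝ) (m n : ℕ),
    ‖∑ i ∈ Finset.Icc m n, a i • e i‖ ≤ K * ‖Finsupp.linearCombination ℝ e a‖

def HasAsympLowerEst (e : ℕ → X) (v : ℕ → V) (C : ℝ) : Prop :=
  ∀ (n : ℕ) (c : Fin n → ℕ →₀ ℝ), (∀ i, ‖Finsupp.linearCombination ℝ e (c i)‖ = 1) →
    (∀ i, ∀ j ∈ (c i).support, n ≤ j) →
    (∀ i i', i < i' → ∀ j ∈ (c i).support, ∀ j' ∈ (c i').support, j < j') →
    ∀ a : Fin n → ℝ,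
      C⁻¹ * ‖∑ i, a i • v i‖ ≤ ‖∑ i, a i • Finsupp.linearCombination ℝ e (c i)‖

theorem IntervalProjBounded.abs_apply_le (hK : IntervalProjBounded e K) (he : SeqNormalized e)
    (a : ℕ →₀ ℝ) (i : ℕ) : |a i| ≤ K * ‖Finsupp.linearCombination ℝ e a‖ := by
  simpa [norm_smul, he i] using hK a i i

theorem IntervalProjBounded.norm_sum_Ico_le (hK : IntervalProjBounded e K) (hK₀ : 0 ≤ K)
    (a : ℕ →₀ ℝ) (m n : ℕ) :
    ‖∑ i ∈ Finset.Ico m n, a i • e i‖ ≤ K * ‖Finsupp.linearCombination ℝ e a‖ := by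
  cases n with
  | zero => simpa using mul_nonneg hK₀ (norm_nonneg _)
  | succ n => simpa only [Finset.Ico_add_one_right_eq_Icc] using hK a m n

theorem HasAsympLowerEst.norm_sum_norm_smul_le_fin (hlow : HasAsympLowerEst e v C) (hC : 0 < C)
    {m : ℕ} (c : Fin m → ℕ →₀ ℝ) (hsupp : ∀ t, ∀ j ∈ (c t).support, m ≤ j)
    (hsucc : ∀ t t', t < t' → ∀ j ∈ (c t).support, ∀ j' ∈ (c t').support, j < j')
    (hne : ∀ t, Finsupp.linearCombination ℝ e (c t) ≠ 0) :
    ‖∑ t, ‖Finsupp.linearCombination ℝ e (c t)‖ • v t‖ ≤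
      C * ‖∑ t, Finsupp.linearCombination ℝ e (c t)‖ := by
  set x := fun t => Finsupp.linearCombination ℝ e (c t)
  have hx : ∀ t, ‖x t‖ ≠ 0 := fun t => norm_ne_zero_iff.mpr (hne t)
  have key := hlow m (fun t => ‖x t‖⁻¹ • c t)
    (fun t => by rw [map_smul, norm_smul, norm_inv, norm_norm, inv_mul_cancel₀ (hx t)])
    (fun t j hj => hsupp t j (Finsupp.support_smul hj))
    (fun t t' htt' j hj j' hj' => hsucc t t' htt' j (Finsupp.support_smul hj) j'
      (Finsupp.support_smul hj')) fun t => ‖x t‖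
  simp only [map_smul, smul_smul, mul_inv_cancel₀ (hx _), one_smul] at key
  rwa [inv_mul_le_iff₀ hC] at key

theorem HasAsympLowerEst.norm_sum_norm_smul_le (hlow : HasAsympLowerEst e v C) (hC : 0 < C)
    (hv : SeqSpreading v) {n : ℕ} (c : ℕ → ℕ →₀ ℝ) (hsupp : ∀ i < n, ∀ j ∈ (c i).support, n ≤ j)
    (hsucc : ∀ i i', i < i' → i' < n → ∀ j ∈ (c i).support, ∀ j' ∈ (c i').support, j < j') :
    ‖∑ i ∈ Finset.range n, ‖Finsupp.linearCombination ℝ e (c i)‖ • v i‖ ≤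
      C * ‖∑ i ∈ Finset.range n, Finsupp.linearCombination ℝ e (c i)‖ := by
  classical
  set x := fun i => Finsupp.linearCombination ℝ e (c i)
  set S := (Finset.range n).filter fun i => x i ≠ 0
  set σ := S.orderEmbOfFin rfl
  have hσS : ∀ t, σ t ∈ S := S.orderEmbOfFin_mem rfl
  have hσn : ∀ t, σ t < n := fun t => Finset.mem_range.mp (Finset.mem_filter.mp (hσS t)).1
  have hSn : S.card ≤ n := (Finset.card_filter_le _ _).trans (Finset.card_range n).le
  calc ‖∑ i ∈ Finset.range n, ‖x i‖ • v i‖ = ‖∑ i ∈ S, ‖x i‖ • v i‖ := by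
        congr 1
        exact (Finset.sum_filter_of_ne (p := fun i => x i ≠ 0) fun i _ h hx =>
          h (by rw [hx, norm_zero, zero_smul])).symm
    _ = ‖∑ t, ‖x (σ t)‖ • v (σ t)‖ := by
        rw [Finset.sum_orderEmbOfFin S fun i => ‖x i‖ • v i]
    _ = ‖∑ t, ‖x (σ t)‖ • v t‖ := hv.norm_sum_fin σ.strictMono _
    _ ≤ C * ‖∑ t, x (σ t)‖ := hlow.norm_sum_norm_smul_le_fin hC (fun t => c (σ t))
        (fun t j hj => hSn.trans (hsupp _ (hσn t) j hj))
        (fun t t' htt' => hsucc _ _ (σ.strictMono htt') (hσn t'))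
        (fun t => (Finset.mem_filter.mp (hσS t)).2)
    _ = C * ‖∑ i ∈ Finset.range n, x i‖ := by
        rw [Finset.sum_orderEmbOfFin S x, Finset.sum_filter_ne_zero]

end BasisEstimates

section TsirelsonDomination

variable {X V : Type*} [NormedAddCommGroup X] [NormedSpace ℝ X]
  [NormedAddCommGroup V] [NormedSpace ℝ V] {e : ℕ → X} {v : ℕ → V} {γ K C : ℝ}

theorem tsNormAux_succ_le_of_asympLowerEst (hv : Is1SubsymBasis v) (hγ₀ : 0 ≤ γ) (hγ₁ : γ ≤ 1)
    (hK : 0 < K) (hKproj : IntervalProjBounded e K) (hC : 0 < C) (hlow : HasAsympLowerEst e v C)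
    (hγK : γ ≤ (K * C)⁻¹) {ℓ : ℕ}
    (ih : ∀ a, tsNormAux v γ ℓ a ≤ K * ‖Finsupp.linearCombination ℝ e a‖) (a : ℕ →₀ ℝ) :
    tsNormAux v γ (ℓ + 1) a ≤ K * ‖Finsupp.linearCombination ℝ e a‖ := by
  refine tsNormAux_succ_le (ih a) fun n A hA => ?_
  obtain ⟨g, hg, hg₀, hAg⟩ := hA.exists_Ico_cover
  set c : ℕ → ℕ →₀ ℝ := fun i => a.filter (· ∈ Finset.Ico (g i) (g (i + 1)))
  set x := fun i => Finsupp.linearCombination ℝ e (c i)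
  have hc : ∀ i, ∀ j ∈ (c i).support, g i ≤ j ∧ j < g (i + 1) := fun i j hj =>
    Finset.mem_Ico.mp (Finset.mem_filter.mp hj).2
  have hpieces : ∀ i ∈ Finset.range n, |tsNormAux v γ ℓ (a.filter (· ∈ A i))| ≤ K * ‖x i‖ := by
    intro i hi
    have hAc : a.filter (· ∈ A i) = (c i).filter (· ∈ A i) := by
      ext j
      simp only [c, Finsupp.filter_apply]
      split_ifs with h₁ h₂ <;> first | rfl | exact absurd (hAg i (Finset.mem_range.mp hi) h₁) h₂
    rw [abs_of_nonneg (tsNormAux_nonneg ℓ _), hAc]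
    exact (tsNormAux_filter_le (fun i => (hv.1.1 i).le) hγ₁ ℓ _ _).trans (ih _)
  have hlower : ‖∑ i ∈ Finset.range n, ‖x i‖ • v i‖ ≤ C * ‖∑ i ∈ Finset.range n, x i‖ :=
    hlow.norm_sum_norm_smul_le hC hv.2 c
      (fun i _ j hj => hg₀ ▸ (hg i.zero_le).trans (hc i j hj).1)
      (fun i i' hii' _ j hj j' hj' => (hc i j hj).2.trans_le ((hg hii').trans (hc i' j' hj').1))
  have hproj : ‖∑ i ∈ Finset.range n, x i‖ ≤ K * ‖Finsupp.linearCombination ℝ e a‖ := by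
    simp only [x, c, Finsupp.linearCombination_filter_mem, Finset.sum_range_sum_Ico _ hg]
    exact hKproj.norm_sum_Ico_le hK.le a _ _
  have hγKC : γ * (K * C) ≤ 1 := calc
    γ * (K * C) ≤ (K * C)⁻¹ * (K * C) := by gcongr
    _ = 1 := inv_mul_cancel₀ (by positivity)
  calc γ * ‖∑ i ∈ Finset.range n, tsNormAux v γ ℓ (a.filter (· ∈ A i)) • v i‖
      ≤ γ * ‖∑ i ∈ Finset.range n, (K * ‖x i‖) • v i‖ := by
        gcongr
        exact hv.1.2.1.norm_sum_le hpieces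
    _ = γ * K * ‖∑ i ∈ Finset.range n, ‖x i‖ • v i‖ := by
        simp only [← smul_smul, ← Finset.smul_sum, norm_smul, Real.norm_of_nonneg hK.le, mul_assoc]
    _ ≤ γ * K * (C * (K * ‖Finsupp.linearCombination ℝ e a‖)) := by
        gcongr
        exact hlower.trans (by gcongr)
    _ = γ * (K * C) * (K * ‖Finsupp.linearCombination ℝ e a‖) := by ring
    _ ≤ K * ‖Finsupp.linearCombination ℝ e a‖ := mul_le_of_le_one_left (by positivity) hγKC

end TsirelsonDomination

theorem statement13_general {X V : Type*}
    [NormedAddCommGroup X] [NormedSpace ℝ X]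
    [NormedAddCommGroup V] [NormedSpace ℝ V]
    (v : ℕ → V) (hv : Is1SubsymBasis v)
    (γ : ℝ) (hγ0 : 0 < γ) (hγ1 : γ < 1)
    (e : ℕ → X) (heNorm : SeqNormalized e)
    (K : ℝ) (hK : 1 ≤ K)
    (hKproj : ∀ (a : ℕ →₀ ℝ) (m n' : ℕ),
      ‖∑ i ∈ Finset.Icc m n', a i • e i‖ ≤ K * ‖a.sum fun i r => r • e i‖)
    (C : ℝ) (hC : 1 ≤ C)
    (hlow : ∀ (n : ℕ) (x : Fin n → X) (c : Fin n → (ℕ →₀ ℝ)),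
      (∀ i, x i = (c i).sum fun ii r => r • e ii) →
      (∀ i, ‖x i‖ = 1) →
      (∀ i, ∀ j ∈ (c i).support, n ≤ j) →
      (∀ i i' : Fin n, i < i' → ∀ j ∈ (c i).support, ∀ j' ∈ (c i').support, j < j') →
      ∀ a : Fin n → ℝ, C⁻¹ * ‖∑ i, a i • v (i : ℕ)‖ ≤ ‖∑ i, a i • x i‖)
    (hγK : γ ≤ (K * C)⁻¹) :
    ∀ a : ℕ →₀ ℝ, tsNorm v γ a ≤ K * ‖a.sum fun i r => r • e i‖ := by
  have hKproj' : IntervalProjBounded e K := hKproj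
  have hlow' : HasAsympLowerEst e v C := fun n c h₁ h₂ h₃ => hlow n _ c (fun _ => rfl) h₁ h₂ h₃
  have hdom : ∀ ℓ a, tsNormAux v γ ℓ a ≤ K * ‖Finsupp.linearCombination ℝ e a‖ := by
    intro ℓ
    induction ℓ with
    | zero => exact fun a => ciSup_le (hKproj'.abs_apply_le heNorm a)
    | succ ℓ ih =>
      exact tsNormAux_succ_le_of_asympLowerEst hv hγ0.le hγ1.le (by linarith) hKproj'
        (by linarith) hlow' hγK ih
  exact fun a => ciSup_le fun ℓ => hdom ℓ a

/-- If `(e_i)` is a normalized basis of `X` with projection constant `K`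
satisfying asymptotic `C`-`V`-lower estimates, and `0 < γ < 1` with `γ ≤ (KC)⁻¹`, then
`(e_i)` `K`-dominates the unit vector basis of the Tsirelson space `T(V,γ)`. -/
theorem statement13 {X V : Type*}
    [NormedAddCommGroup X] [NormedSpace ℝ X] [CompleteSpace X]
    [NormedAddCommGroup V] [NormedSpace ℝ V] [CompleteSpace V]
    (v : ℕ → V) (hv : Is1SubsymBasis v)
    (γ : ℝ) (hγ0 : 0 < γ) (hγ1 : γ < 1)
    (e : ℕ → X) (heNorm : SeqNormalized e) (heTotal : SeqTotal e)
    (K : ℝ) (hK : 1 ≤ K)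
    (hKproj : ∀ (a : ℕ →₀ ℝ) (m n' : ℕ),
      ‖∑ i ∈ Finset.Icc m n', a i • e i‖ ≤ K * ‖a.sum fun i r => r • e i‖)
    (C : ℝ) (hC : 1 ≤ C)
    (hlow : ∀ (n : ℕ) (x : Fin n → X) (c : Fin n → (ℕ →₀ ℝ)),
      (∀ i, x i = (c i).sum fun ii r => r • e ii) →
      (∀ i, ‖x i‖ = 1) →
      (∀ i, ∀ j ∈ (c i).support, n ≤ j) →
      (∀ i i' : Fin n, i < i' → ∀ j ∈ (c i).support, ∀ j' ∈ (c i').support, j < j') →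
      ∀ a : Fin n → ℝ, C⁻¹ * ‖∑ i, a i • v (i : ℕ)‖ ≤ ‖∑ i, a i • x i‖)
    (hγK : γ ≤ (K * C)⁻¹) :
    ∀ a : ℕ →₀ ℝ, tsNorm v γ a ≤ K * ‖a.sum fun i r => r • e i‖ :=
  statement13_general v hv γ hγ0 hγ1 e heNorm K hK hKproj C hC hlow hγK
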